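/- arXiv:hep-th/9508079 — 2 statements merged into one kernel-verified Lean document; each statement's English description precedes it below -/
import Mathlib

section
/- For all integers r ≥ 3, a ∈ {1,…,r−1} and L ≥ 2, the configuration sum X_L(a,b) satisfies the closed recurrences: X_L(a,b) = q^{L/2} X_{L−1}(a,b−1) + q^{(L−1)/2} X_{L−1}(a,b+1) + (1 − q^{L−1}) X_{L−2}(a,b) for b = 1,…,r−3, and X_L(a,b) = q^{L/2} X_{L−1}(a,b−1) + X_{L−2}(a,b) for b = r−2, where by convention X_{L−1}(a,0) = 0. -/
attribute [local instance] Classical.propDecidable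

noncomputable section

variable {K : Type*} [Field K]

/-- `(q)_n` where `q = t^4` (the variable `t` stands for `q^{1/4}`). -/
def qp (t : K) (n : ℕ) : K :=
  ∏ k ∈ Finset.range n, (1 - t ^ (4 * (k + 1)))

/-- Gaussian polynomial `[N; m]` in the variable `q = t^4`. -/
def gauss (t : K) (N m : ℤ) : K :=
  if 0 ≤ m ∧ m ≤ N then qp t N.toNat / (qp t m.toNat * qp t (N - m).toNat) else 0

/-- Gaussian polynomial `[N2/2; m]` (zero if `N2` is odd). -/
def gaussHalf (t : K) (N2 m : ℤ) : K :=
  if N2 % 2 = 0 then gauss t (N2 / 2) m else 0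

/-- Incidence matrix of the Dynkin diagram `A_d` (indices `i : Fin d` stand for `i+1`). -/
def inc (d : ℕ) (i k : Fin d) : ℤ := if (i : ℕ) + 1 = (k : ℕ) ∨ (k : ℕ) + 1 = (i : ℕ) then 1 else 0

/-- Cartan matrix of `A_d`. -/
def cartan (d : ℕ) (i k : Fin d) : ℤ := (if i = k then 2 else 0) - inc d i k

/-- the `s`-th unit vector, with the convention `e_0 = e_{d+1} = 0`. -/
def uv (d : ℕ) (s : ℤ) (i : Fin d) : ℤ := if ((i : ℕ) : ℤ) + 1 = s then 1 else 0

/-- `m_s`, with the conventions `m_0 = m_{d+1} = 0`. -/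
def mAt (d : ℕ) (m : Fin d → ℕ) (s : ℤ) : ℤ := ∑ i, uv d s i * (m i : ℤ)

/-- `mᵀ C m` for the `A_d` Cartan matrix. -/
def quadC (d : ℕ) (m : Fin d → ℕ) : ℤ := ∑ i, ∑ k, (m i : ℤ) * cartan d i k * (m k : ℤ)

/-- the vector `Q_{a,b}`. -/
def Qab (r a b : ℕ) (i : Fin (r - 3)) : ℕ :=
  min (a - 1) (r - ((i : ℕ) + 1) - 2) + min (b - 1) (r - ((i : ℕ) + 1) - 2)

/-- the parity restriction `m ≡ Q_{a,b} (mod 2)`. -/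
def parity (r a b : ℕ) (m : Fin (r - 3) → ℕ) : Prop := ∀ i, m i % 2 = Qab r a b i % 2

/-- `(I m + L e_1 + e_{r-a-1} + e_{r-b-1})_i`. -/
def topE (r a b L : ℕ) (m : Fin (r - 3) → ℕ) (i : Fin (r - 3)) : ℤ :=
  (∑ k, inc (r - 3) i k * (m k : ℤ)) + (L : ℤ) * uv (r - 3) 1 i
    + uv (r - 3) ((r : ℤ) - a - 1) i + uv (r - 3) ((r : ℤ) - b - 1) i

/-- the summand `q^{(1/4) mᵀCm - (1/2) m_{r-a-1}} ∏_j [(1/2)(Im + Le_1 + e_{r-a-1} + e_{r-b-1})_j; m_j]`,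
in the variable `t = q^{1/4}`. -/
def fermTerm (r a b L : ℕ) (t : K) (m : Fin (r - 3) → ℕ) : K :=
  t ^ (quadC (r - 3) m - 2 * mAt (r - 3) m ((r : ℤ) - a - 1))
    * ∏ i, gaussHalf t (topE r a b L m i) (m i)

/-- the fermionic sum `Σ_{m ≡ Q_{a,b}} (⋯)`. -/
def fermSum (r a b L : ℕ) (t : K) : K :=
  ∑ᶠ m : Fin (r - 3) → ℕ, if parity r a b m then fermTerm r a b L t m else 0

/-- The one-dimensional configuration sum `X_L(a,b,c)` of the ABF model:
the sum over all sequences `σ_0,…,σ_{L+1}` with values in `{0,…,r-2}`,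
`|σ_{j+1} - σ_j| = 1`, `σ_0 = a-1`, `σ_L = b-1`, `σ_{L+1} = c-1`, of
`t^(Σ_{k=1}^L k|σ_{k+1} - σ_{k-1}|)`, where `t = q^{1/4}`. -/
def conf (r L a b c : ℕ) : RatFunc ℚ :=
  ∑ σ : Fin (L + 2) → Fin (r - 1),
    (fun s : ℕ → ℤ =>
      if (∀ j, j ≤ L → |s (j + 1) - s j| = 1) ∧
          s 0 = (a : ℤ) - 1 ∧ s L = (b : ℤ) - 1 ∧ s (L + 1) = (c : ℤ) - 1
      then (RatFunc.X : RatFunc ℚ) ^ (∑ k ∈ Finset.Icc 1 L, (k : ℤ) * |s (k + 1) - s (k - 1)|)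
      else 0)
    (fun j => if h : j < L + 2 then ((σ ⟨j, h⟩ : ℕ) : ℤ) else 0)

lemma sum_snoc {β M : Type*} [Fintype β] [AddCommMonoid M] (n : ℕ)
    (f : (Fin (n + 1) → β) → M) :
    ∑ σ : Fin (n + 1) → β, f σ = ∑ τ : Fin n → β, ∑ x : β, f (Fin.snoc τ x) := by
  rw [← (Fin.snocEquiv (fun _ => β)).sum_comp f, Fintype.sum_prod_type, Finset.sum_comm]
  rfl

def sf (r n : ℕ) (σ : Fin n → Fin (r - 1)) (j : ℕ) : ℤ :=
  if h : j < n then ((σ ⟨j, h⟩ : ℕ) : ℤ) else 0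

def cterm' (r n L a b c : ℕ) (σ : Fin n → Fin (r - 1)) : RatFunc ℚ :=
  if (∀ j, j ≤ L → |sf r n σ (j + 1) - sf r n σ j| = 1) ∧
      sf r n σ 0 = (a : ℤ) - 1 ∧ sf r n σ L = (b : ℤ) - 1 ∧ sf r n σ (L + 1) = (c : ℤ) - 1
  then (RatFunc.X : RatFunc ℚ) ^ (∑ k ∈ Finset.Icc 1 L, (k : ℤ) * |sf r n σ (k + 1) - sf r n σ (k - 1)|)
  else 0

lemma conf_eq' (r L a b c : ℕ) :
    conf r L a b c = ∑ σ : Fin (L + 2) → Fin (r - 1), cterm' r (L + 2) L a b c σ := rfl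

lemma conf_succ (r L a b c : ℕ) :
    conf r (L + 1) a b c
      = ∑ τ : Fin (L + 2) → Fin (r - 1), ∑ x : Fin (r - 1),
          cterm' r (L + 2 + 1) (L + 1) a b c (Fin.snoc τ x) := by
  have h : conf r (L + 1) a b c
      = ∑ σ : Fin (L + 2 + 1) → Fin (r - 1), cterm' r (L + 2 + 1) (L + 1) a b c σ := rfl
  rw [h, sum_snoc]

lemma sf_snoc_lt {r n : ℕ} (τ : Fin n → Fin (r - 1)) (x : Fin (r - 1)) {j : ℕ} (h : j < n) :
    sf r (n + 1) (Fin.snoc τ x) j = sf r n τ j := by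
  have h' : j < n + 1 := Nat.lt_succ_of_lt h
  have e : (⟨j, h'⟩ : Fin (n + 1)) = Fin.castSucc ⟨j, h⟩ := rfl
  rw [sf, sf, dif_pos h, dif_pos h', e, Fin.snoc_castSucc]

lemma sf_snoc_last {r n : ℕ} (τ : Fin n → Fin (r - 1)) (x : Fin (r - 1)) :
    sf r (n + 1) (Fin.snoc τ x) n = (x : ℤ) := by
  have e : (⟨n, Nat.lt_succ_self n⟩ : Fin (n + 1)) = Fin.last n := rfl
  rw [sf, dif_pos (Nat.lt_succ_self n), e, Fin.snoc_last]

lemma conf_eq_zero (r L a b c : ℕ) (hb : r ≤ b) : conf r L a b c = 0 := by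
  rw [conf_eq']
  apply Finset.sum_eq_zero
  intro σ _
  rw [cterm', if_neg]
  rintro ⟨-, -, h3, -⟩
  have hLlt : L < L + 2 := by omega
  rw [sf, dif_pos hLlt] at h3
  have h5 : ((σ ⟨L, hLlt⟩ : ℕ)) < r - 1 := (σ ⟨L, hLlt⟩).isLt
  omega

lemma conf_step (r a L b c n₁ n₂ : ℕ) (hb : 1 ≤ b) (hc1 : 1 ≤ c) (hc2 : c ≤ r - 1)
    (hcb : |(c : ℤ) - b| = 1)
    (h1 : (n₁ : ℤ) = ((L : ℤ) + 1) * |(c : ℤ) - b + 1|)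
    (h2 : (n₂ : ℤ) = ((L : ℤ) + 1) * |(c : ℤ) - b - 1|) :
    conf r (L + 1) a b c
      = (RatFunc.X : RatFunc ℚ) ^ n₁ * conf r L a (b - 1) b
        + (RatFunc.X : RatFunc ℚ) ^ n₂ * conf r L a (b + 1) b := by
  have hX : (RatFunc.X : RatFunc ℚ) ≠ 0 := RatFunc.X_ne_zero
  have hb' : ((b - 1 : ℕ) : ℤ) = (b : ℤ) - 1 := by omega
  have hcr : c - 1 < r - 1 := by omega
  set x₀ : Fin (r - 1) := ⟨c - 1, hcr⟩ with hx₀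
  have hx₀' : ((x₀ : ℕ) : ℤ) = (c : ℤ) - 1 := by
    show ((c - 1 : ℕ) : ℤ) = (c : ℤ) - 1
    omega
  rw [conf_succ, conf_eq' r L a (b - 1) b, conf_eq' r L a (b + 1) b,
    Finset.mul_sum, Finset.mul_sum, ← Finset.sum_add_distrib]
  apply Finset.sum_congr rfl
  intro τ _
  -- kill all x ≠ x₀
  have hside : ∀ x : Fin (r - 1), x ≠ x₀ →
      cterm' r (L + 2 + 1) (L + 1) a b c (Fin.snoc τ x) = 0 := by
    intro x hx
    rw [cterm']
    refine if_neg ?_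
    rintro ⟨-, -, -, h4⟩
    have hl := sf_snoc_last τ x
    have hx' : ((x : ℕ) : ℤ) = (c : ℤ) - 1 := by rw [← hl]; exact h4
    apply hx
    apply Fin.ext
    show (x : ℕ) = (x₀ : ℕ)
    have hx0v : (x₀ : ℕ) = c - 1 := rfl
    omega
  rw [Fintype.sum_eq_single x₀ hside]
  -- main term
  rw [cterm', cterm', cterm']
  have hS_last : sf r (L + 2 + 1) (Fin.snoc τ x₀) (L + 1 + 1) = (c : ℤ) - 1 := by
    have h := sf_snoc_last τ x₀
    rw [hx₀'] at h
    exact h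
  have hS : ∀ j, j < L + 2 → sf r (L + 2 + 1) (Fin.snoc τ x₀) j = sf r (L + 2) τ j :=
    fun j h => sf_snoc_lt τ x₀ h
  have hsplit : (∀ j, j ≤ L + 1 →
      |sf r (L + 2 + 1) (Fin.snoc τ x₀) (j + 1) - sf r (L + 2 + 1) (Fin.snoc τ x₀) j| = 1)
      ↔ (∀ j, j ≤ L → |sf r (L + 2) τ (j + 1) - sf r (L + 2) τ j| = 1) ∧
          |((c : ℤ) - 1) - sf r (L + 2) τ (L + 1)| = 1 := by
    constructor
    · intro h
      refine ⟨fun j hj => ?_, ?_⟩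
      · rw [← hS (j + 1) (by omega), ← hS j (by omega)]; exact h j (by omega)
      · have h' := h (L + 1) le_rfl
        rwa [hS_last, hS (L + 1) (by omega)] at h'
    · rintro ⟨hA, hB⟩ j hj
      rcases Nat.lt_or_ge j (L + 1) with hj' | hj'
      · rw [hS (j + 1) (by omega), hS j (by omega)]; exact hA j (by omega)
      · have hj2 : j = L + 1 := by omega
        subst hj2
        rw [hS_last, hS (L + 1) (by omega)]; exact hB
  have hw : (∑ k ∈ Finset.Icc 1 (L + 1), (k : ℤ) *
        |sf r (L + 2 + 1) (Fin.snoc τ x₀) (k + 1) - sf r (L + 2 + 1) (Fin.snoc τ x₀) (k - 1)|)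
      = (∑ k ∈ Finset.Icc 1 L, (k : ℤ) * |sf r (L + 2) τ (k + 1) - sf r (L + 2) τ (k - 1)|)
        + ((L : ℤ) + 1) * |((c : ℤ) - 1) - sf r (L + 2) τ L| := by
    rw [Finset.sum_Icc_succ_top (by omega : 1 ≤ L + 1)]
    congr 1
    · apply Finset.sum_congr rfl
      intro k hk
      simp only [Finset.mem_Icc] at hk
      rw [hS (k + 1) (by omega), hS (k - 1) (by omega)]
    · rw [hS_last, hS (L + 1 - 1) (by omega)]
      have he : sf r (L + 2) τ (L + 1 - 1) = sf r (L + 2) τ L := by congr 1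
      rw [he]
      push_cast
      ring
  rw [hw, hS 0 (by omega), hS (L + 1) (by omega), hS_last]
  have hiff : ((∀ j, j ≤ L + 1 →
      |sf r (L + 2 + 1) (Fin.snoc τ x₀) (j + 1) - sf r (L + 2 + 1) (Fin.snoc τ x₀) j| = 1) ∧
      sf r (L + 2) τ 0 = (a : ℤ) - 1 ∧ sf r (L + 2) τ (L + 1) = (b : ℤ) - 1 ∧
      (c : ℤ) - 1 = (c : ℤ) - 1)
      ↔ ((∀ j, j ≤ L → |sf r (L + 2) τ (j + 1) - sf r (L + 2) τ j| = 1) ∧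
          |((c : ℤ) - 1) - sf r (L + 2) τ (L + 1)| = 1 ∧
          sf r (L + 2) τ 0 = (a : ℤ) - 1 ∧ sf r (L + 2) τ (L + 1) = (b : ℤ) - 1) := by
    rw [hsplit]
    tauto
  rw [if_congr hiff rfl rfl]
  -- now case on the path condition
  by_cases hQ : (∀ j, j ≤ L → |sf r (L + 2) τ (j + 1) - sf r (L + 2) τ j| = 1) ∧
      sf r (L + 2) τ 0 = (a : ℤ) - 1 ∧ sf r (L + 2) τ (L + 1) = (b : ℤ) - 1
  · obtain ⟨hsteps, h0, hL1⟩ := hQ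
    have habs : |(c : ℤ) - 1 - sf r (L + 2) τ (L + 1)| = 1 := by
      rw [hL1, show (c : ℤ) - 1 - ((b : ℤ) - 1) = (c : ℤ) - b by ring]; exact hcb
    have htop := hsteps L le_rfl
    rw [hL1] at htop
    have hv : sf r (L + 2) τ L = (b : ℤ) - 2 ∨ sf r (L + 2) τ L = (b : ℤ) := by
      rw [abs_eq (by norm_num : (0:ℤ) ≤ 1)] at htop
      omega
    rw [if_pos ⟨hsteps, habs, h0, hL1⟩]
    rcases hv with hv | hv
    · rw [if_pos ⟨hsteps, h0, by rw [hv, hb']; ring, hL1⟩, if_neg (by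
        rintro ⟨-, -, hbad, -⟩
        rw [hv] at hbad
        omega)]
      rw [mul_zero, add_zero, hv, ← zpow_natCast (RatFunc.X : RatFunc ℚ) n₁,
        ← zpow_add₀ hX]
      congr 1
      rw [h1, show (c : ℤ) - 1 - ((b : ℤ) - 2) = (c : ℤ) - b + 1 by ring]
      ring
    · rw [if_neg (by
        rintro ⟨-, -, hbad, -⟩
        rw [hv] at hbad
        omega), if_pos ⟨hsteps, h0, by rw [hv]; push_cast; ring, hL1⟩]
      rw [mul_zero, zero_add, hv, ← zpow_natCast (RatFunc.X : RatFunc ℚ) n₂,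
        ← zpow_add₀ hX]
      congr 1
      rw [h2, show (c : ℤ) - 1 - (b : ℤ) = (c : ℤ) - b - 1 by ring]
      ring
  · rw [if_neg (by rintro ⟨hA, _, hx, hy⟩; exact hQ ⟨hA, hx, hy⟩),
      if_neg (by rintro ⟨hA, hx, _, hy⟩; exact hQ ⟨hA, hx, hy⟩),
      if_neg (by rintro ⟨hA, hx, _, hy⟩; exact hQ ⟨hA, hx, hy⟩)]
    simp


/-- The closed recurrences for `X_L(a,b) = conf r L a b (b+1)`:
`X_L(a,b) = q^{L/2} X_{L-1}(a,b-1) + q^{(L-1)/2} X_{L-1}(a,b+1) + (1-q^{L-1}) X_{L-2}(a,b)`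
for `b = 1,…,r-3`, and `X_L(a,r-2) = q^{L/2} X_{L-1}(a,r-3) + X_{L-2}(a,r-2)`,
with the convention `X_{L-1}(a,0) = 0`; stated in the variable `t = q^{1/4}`. -/
theorem conf_closed_recurrence (r a L : ℕ) (hr : 3 ≤ r) (ha : 1 ≤ a) (ha' : a ≤ r - 1)
    (hL : 2 ≤ L) :
    (∀ b, 1 ≤ b → b ≤ r - 3 →
      conf r L a b (b + 1)
        = (RatFunc.X : RatFunc ℚ) ^ (2 * L) * conf r (L - 1) a (b - 1) b
          + (RatFunc.X : RatFunc ℚ) ^ (2 * (L - 1)) * conf r (L - 1) a (b + 1) (b + 2)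
          + (1 - (RatFunc.X : RatFunc ℚ) ^ (4 * (L - 1))) * conf r (L - 2) a b (b + 1)) ∧
    conf r L a (r - 2) (r - 1)
      = (RatFunc.X : RatFunc ℚ) ^ (2 * L) * conf r (L - 1) a (r - 3) (r - 2)
        + conf r (L - 2) a (r - 2) (r - 1) := by
  obtain ⟨M, rfl⟩ : ∃ M, L = M + 2 := ⟨L - 2, by omega⟩
  rw [show M + 2 - 1 = M + 1 by omega, show M + 2 - 2 = M by omega]
  constructor
  · intro b hb1 hb2
    have e1 := conf_step r a (M + 1) b (b + 1) (2 * (M + 2)) 0 hb1 (by omega) (by omega)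
      (by push_cast; ring_nf; norm_num)
      (by push_cast
          rw [show ((b : ℤ) + 1 - b + 1) = 2 by ring, show |(2:ℤ)| = 2 by norm_num]
          ring)
      (by push_cast
          rw [show ((b : ℤ) + 1 - b - 1) = 0 by ring]
          simp)
    rw [pow_zero, one_mul] at e1
    have e1' : conf r (M + 2) a b (b + 1)
        = (RatFunc.X : RatFunc ℚ) ^ (2 * (M + 2)) * conf r (M + 1) a (b - 1) b
          + conf r (M + 1) a (b + 1) b := e1
    have e2 := conf_step r a M (b + 1) b 0 (2 * (M + 1)) (by omega) hb1 (by omega)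
      (by push_cast
          rw [show ((b : ℤ) - (b + 1)) = -1 by ring, show |(-1:ℤ)| = 1 by norm_num])
      (by push_cast
          rw [show ((b : ℤ) - (b + 1) + 1) = 0 by ring]
          simp)
      (by push_cast
          rw [show ((b : ℤ) - (b + 1) - 1) = -2 by ring, show |(-2:ℤ)| = 2 by norm_num]
          ring)
    rw [pow_zero, one_mul] at e2
    have e2' : conf r (M + 1) a (b + 1) b
        = conf r M a b (b + 1)
          + (RatFunc.X : RatFunc ℚ) ^ (2 * (M + 1)) * conf r M a (b + 2) (b + 1) := e2
    have e3 := conf_step r a M (b + 1) (b + 2) (2 * (M + 1)) 0 (by omega) (by omega) (by omega)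
      (by push_cast
          rw [show ((b : ℤ) + 2 - (b + 1)) = 1 by ring, show |(1:ℤ)| = 1 by norm_num])
      (by push_cast
          rw [show ((b : ℤ) + 2 - (b + 1) + 1) = 2 by ring, show |(2:ℤ)| = 2 by norm_num]
          ring)
      (by push_cast
          rw [show ((b : ℤ) + 2 - (b + 1) - 1) = 0 by ring]
          simp)
    rw [pow_zero, one_mul] at e3
    have e3' : conf r (M + 1) a (b + 1) (b + 2)
        = (RatFunc.X : RatFunc ℚ) ^ (2 * (M + 1)) * conf r M a b (b + 1)
          + conf r M a (b + 2) (b + 1) := e3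
    rw [e1', e2', e3']
    ring
  · have eA := conf_step r a (M + 1) (r - 2) (r - 1) (2 * (M + 2)) 0 (by omega) (by omega)
      (by omega)
      (by rw [show ((r - 1 : ℕ) : ℤ) - ((r - 2 : ℕ) : ℤ) = 1 by omega]; norm_num)
      (by rw [show ((r - 1 : ℕ) : ℤ) - ((r - 2 : ℕ) : ℤ) + 1 = 2 by omega,
            show |(2:ℤ)| = 2 by norm_num]
          push_cast; ring)
      (by rw [show ((r - 1 : ℕ) : ℤ) - ((r - 2 : ℕ) : ℤ) - 1 = 0 by omega]; simp)
    rw [pow_zero, one_mul, show r - 2 + 1 = r - 1 by omega] at eA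
    have eA' : conf r (M + 2) a (r - 2) (r - 1)
        = (RatFunc.X : RatFunc ℚ) ^ (2 * (M + 2)) * conf r (M + 1) a (r - 3) (r - 2)
          + conf r (M + 1) a (r - 1) (r - 2) := eA
    have eB := conf_step r a M (r - 1) (r - 2) 0 (2 * (M + 1)) (by omega) (by omega)
      (by omega)
      (by rw [show ((r - 2 : ℕ) : ℤ) - ((r - 1 : ℕ) : ℤ) = -1 by omega]; norm_num)
      (by rw [show ((r - 2 : ℕ) : ℤ) - ((r - 1 : ℕ) : ℤ) + 1 = 0 by omega]; simp)
      (by rw [show ((r - 2 : ℕ) : ℤ) - ((r - 1 : ℕ) : ℤ) - 1 = -2 by omega,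
            show |(-2:ℤ)| = 2 by norm_num]
          push_cast; ring)
    rw [pow_zero, one_mul, show r - 1 + 1 = r by omega,
      conf_eq_zero r M a r (r - 1) le_rfl, mul_zero, add_zero] at eB
    have eB' : conf r (M + 1) a (r - 1) (r - 2) = conf r M a (r - 2) (r - 1) := eB
    rw [eA', eB']
end
end

section
/- Let r ≥ 3, a ∈ {1,…,r−1}, b ∈ {1,…,r−2}, L ≥ 0 with L ≡ a − b (mod 2), and for m ∈ (ℤ_{≥0})^{r−3} set f(m) = q^{(1/4) mᵀC m − (1/2) m_{r−a−1}} ∏_{j=1}^{r−3} [ (1/2)(I m + L e_1 + e_{r−a−1} + e_{r−b−1})_j ; m_j ]. Then Σ_{μ=0}^{min(a,b)−1} Σ_{m satisfying restriction (μ)} f(m) = Σ_{m : m_j ≡ min(a−1,r−j−2) + min(b−1,r−j−2) (mod 2) for all j} f(m), where restriction (μ) requires m_j ∈ min(a−1,r−j−2) + min(b−1,r−j−2) − 2μ + 2ℤ_{≥0} for j = 1,…,r−μ−3 and m_j = 0 for j = r−μ−2,…,r−3. -/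
attribute [local instance] Classical.propDecidable

noncomputable section

variable {K : Type*} [Field K]

/-- the restriction `(μ)`: `m_j ∈ min(a-1,r-j-2) + min(b-1,r-j-2) - 2μ + 2ℤ_{≥0}` for
`j = 1,…,r-μ-3`, and `m_j = 0` for `j = r-μ-2,…,r-3`. -/
def restrMu (r a b μ : ℕ) (m : Fin (r - 3) → ℕ) : Prop :=
  (∀ i : Fin (r - 3), (i : ℕ) + 1 + μ + 3 ≤ r →
      ∃ n : ℕ, (m i : ℤ) = (Qab r a b i : ℤ) - 2 * μ + 2 * n) ∧
  (∀ i : Fin (r - 3), r ≤ (i : ℕ) + μ + 3 → m i = 0)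


lemma qp_ne_zero (n : ℕ) : qp (RatFunc.X : RatFunc ℚ) n ≠ 0 := by
  unfold qp
  rw [Finset.prod_ne_zero_iff]
  intro k _
  rw [sub_ne_zero]
  intro h
  rw [← RatFunc.algebraMap_X (K := ℚ), ← map_pow,
    ← map_one (algebraMap (Polynomial ℚ) (RatFunc ℚ))] at h
  have h2 := RatFunc.algebraMap_injective ℚ h.symm
  have h3 := congrArg Polynomial.natDegree h2
  simp [Polynomial.natDegree_X_pow] at h3

lemma gaussHalf_ne_zero_iff (N2 mi : ℤ) :
    gaussHalf (RatFunc.X : RatFunc ℚ) N2 mi ≠ 0 ↔ N2 % 2 = 0 ∧ 0 ≤ mi ∧ 2 * mi ≤ N2 := by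
  unfold gaussHalf gauss
  split_ifs with h1 h2
  · refine iff_of_true (div_ne_zero (qp_ne_zero _) (mul_ne_zero (qp_ne_zero _) (qp_ne_zero _)))
      ⟨h1, h2.1, by omega⟩
  · exact iff_of_false (by simp) (by omega)
  · exact iff_of_false (by simp) (by omega)

lemma mAt_coe (d : ℕ) (m : Fin d → ℕ) (i : Fin d) :
    mAt d m (((i : ℕ) : ℤ) + 1) = (m i : ℤ) := by
  unfold mAt uv
  rw [Finset.sum_eq_single i]
  · rw [if_pos rfl, one_mul]
  · intro k _ hk
    have hne : ¬(((k : ℕ) : ℤ) + 1 = ((i : ℕ) : ℤ) + 1) := fun hc => hk (Fin.ext (by omega))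
    rw [if_neg hne, zero_mul]
  · intro h; exact absurd (Finset.mem_univ i) h

lemma mAt_out (d : ℕ) (m : Fin d → ℕ) (s : ℤ) (h : s ≤ 0 ∨ (d : ℤ) < s) : mAt d m s = 0 := by
  unfold mAt uv
  apply Finset.sum_eq_zero
  intro i _
  have hi := i.isLt
  rw [if_neg (by omega), zero_mul]

lemma mAt_nonneg (d : ℕ) (m : Fin d → ℕ) (s : ℤ) : 0 ≤ mAt d m s := by
  unfold mAt uv
  apply Finset.sum_nonneg
  intro i _
  apply mul_nonneg _ (Int.natCast_nonneg _)
  split <;> norm_num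

lemma inc_eq (d : ℕ) (i k : Fin d) :
    inc d i k = uv d ((i : ℕ) : ℤ) k + uv d (((i : ℕ) : ℤ) + 2) k := by
  unfold inc uv
  have hi := i.isLt
  have hk := k.isLt
  split_ifs <;> omega

lemma topE_eq (r a b L : ℕ) (m : Fin (r - 3) → ℕ) (i : Fin (r - 3)) :
    topE r a b L m i = mAt (r - 3) m ((i : ℕ) : ℤ) + mAt (r - 3) m (((i : ℕ) : ℤ) + 2)
      + (if ((i : ℕ) : ℤ) + 1 = 1 then (L : ℤ) else 0)
      + (if ((i : ℕ) : ℤ) + 1 = (r : ℤ) - a - 1 then 1 else 0)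
      + (if ((i : ℕ) : ℤ) + 1 = (r : ℤ) - b - 1 then 1 else 0) := by
  unfold topE
  have h1 : ∑ k, inc (r - 3) i k * (m k : ℤ)
      = mAt (r - 3) m ((i : ℕ) : ℤ) + mAt (r - 3) m (((i : ℕ) : ℤ) + 2) := by
    unfold mAt
    rw [← Finset.sum_add_distrib]
    apply Finset.sum_congr rfl
    intro k _
    rw [inc_eq, add_mul]
  rw [h1]
  unfold uv
  rw [mul_ite, mul_one, mul_zero]


lemma seq_bound (r a b L : ℕ) (n : ℕ → ℤ) (hr : 3 ≤ r)
    (Hpos : ∀ k, 0 ≤ n k) (H0 : n 0 = 0) (Hhi : ∀ k, r - 2 ≤ k → n k = 0)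
    (Hc : ∀ k, 1 ≤ k → k ≤ r - 3 →
      2 * n k ≤ n (k - 1) + n (k + 1) + (if k = r - 3 then (L : ℤ) else 0)
        + (if k = a - 1 then 1 else 0) + (if k = b - 1 then 1 else 0)) :
    ∀ k, n k ≤ ((r : ℤ) - 2) * ((L : ℤ) + 2) := by
  have hDr : ∀ t, ∀ l, l + t = r - 2 → 1 ≤ l →
      n l - n (l - 1) ≤ (if l ≤ r - 3 then (L : ℤ) else 0)
        + (if l ≤ a - 1 then 1 else 0) + (if l ≤ b - 1 then 1 else 0) := by
    intro t
    induction t with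
    | zero =>
      intro l hl h1
      have e1 : n l = 0 := Hhi l (by omega)
      have e2 := Hpos (l - 1)
      split_ifs <;> omega
    | succ t ih =>
      intro l hl h1
      have hcon := Hc l h1 (by omega)
      have hih := ih (l + 1) (by omega) (by omega)
      have e : l + 1 - 1 = l := by omega
      rw [e] at hih
      split_ifs at hcon hih ⊢ <;> omega
  have hD : ∀ l, 1 ≤ l → l ≤ r - 2 → n l - n (l - 1) ≤ (L : ℤ) + 2 := by
    intro l h1 h2
    have := hDr (r - 2 - l) l (by omega) h1
    split_ifs at this <;> omega
  have hgrow : ∀ k, k ≤ r - 2 → n k ≤ (k : ℤ) * ((L : ℤ) + 2) := by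
    intro k
    induction k with
    | zero => intro _; rw [H0]; simp
    | succ k ih =>
      intro hk
      have h1 := hD (k + 1) (by omega) hk
      have h2 := ih (by omega)
      have e : k + 1 - 1 = k := by omega
      rw [e] at h1
      have e2 : ((k + 1 : ℕ) : ℤ) * ((L : ℤ) + 2) = (k : ℤ) * ((L : ℤ) + 2) + ((L : ℤ) + 2) := by
        push_cast; ring
      linarith
  intro k
  rcases le_or_gt k (r - 2) with h | h
  · calc n k ≤ (k : ℤ) * ((L : ℤ) + 2) := hgrow k h
      _ ≤ ((r : ℤ) - 2) * ((L : ℤ) + 2) := by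
          apply mul_le_mul_of_nonneg_right _ (by omega)
          omega
  · rw [Hhi k (by omega)]
    exact mul_nonneg (by omega) (by omega)

lemma seq_cover (r a b L : ℕ) (n : ℕ → ℤ) (hr : 3 ≤ r) (ha : 1 ≤ a) (ha' : a ≤ r - 1)
    (hb : 1 ≤ b) (hb' : b ≤ r - 2)
    (Hpos : ∀ k, 0 ≤ n k) (H0 : n 0 = 0) (Hhi : ∀ k, r - 2 ≤ k → n k = 0)
    (Hc : ∀ k, 1 ≤ k → k ≤ r - 3 →
      2 * n k ≤ n (k - 1) + n (k + 1) + (if k = r - 3 then (L : ℤ) else 0)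
        + (if k = a - 1 then 1 else 0) + (if k = b - 1 then 1 else 0))
    (Hpar : ∀ k, 1 ≤ k → k ≤ r - 3 →
      n k % 2 = ((min (a - 1) k + min (b - 1) k : ℕ) : ℤ) % 2) :
    ∃ μ, μ < min a b ∧ (∀ k, 1 ≤ k → k ≤ μ → n k = 0) ∧
      (∀ k, μ + 1 ≤ k → k ≤ r - 3 →
        ((min (a - 1) k + min (b - 1) k : ℕ) : ℤ) - 2 * μ ≤ n k) := by
  by_cases hall : ∀ k, 1 ≤ k → k ≤ r - 3 → n k = 0
  · refine ⟨min a b - 1, by omega, fun k h1 h2 => hall k h1 (by omega), fun k h1 h2 => ?_⟩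
    have e1 := hall k (by omega) h2
    have e2 := hall (min a b) (by omega) (by omega)
    have e3 := Hpar (min a b) (by omega) (by omega)
    omega
  · push_neg at hall
    obtain ⟨k0, hk01, hk03, hk0n⟩ := hall
    have hex : ∃ k, 1 ≤ k ∧ k ≤ r - 3 ∧ n k ≠ 0 := ⟨k0, hk01, hk03, hk0n⟩
    set K0 := Nat.find hex with hK0def
    obtain ⟨hK1, hK3, hKn⟩ := Nat.find_spec hex
    have hmin : ∀ j, j < K0 → 1 ≤ j → j ≤ r - 3 → n j = 0 := by
      intro j hj h1 h3
      by_contra hne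
      exact Nat.find_min hex (by omega : j < Nat.find hex) ⟨h1, h3, hne⟩
    set μ := min (K0 - 1) (min a b - 1) with hμdef
    have hzero : ∀ k, 1 ≤ k → k ≤ μ → n k = 0 :=
      fun k h1 h2 => hmin k (by omega) h1 (by omega)
    have hnμ : n μ = 0 := by
      rcases Nat.eq_zero_or_pos μ with h | h
      · rw [h]; exact H0
      · exact hzero μ h le_rfl
    have main : ∀ k, μ + 1 ≤ k → k ≤ r - 3 →
        ((min (a - 1) k + min (b - 1) k : ℕ) : ℤ) - 2 * μ ≤ n k ∧
        ((min (a - 1) k + min (b - 1) k : ℕ) : ℤ)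
          - ((min (a - 1) (k - 1) + min (b - 1) (k - 1) : ℕ) : ℤ) ≤ n k - n (k - 1) := by
      intro k hk
      induction k, hk using Nat.le_induction with
      | base =>
        intro h3
        have hpar := Hpar (μ + 1) (by omega) h3
        have e : μ + 1 - 1 = μ := by omega
        rw [e]
        have hcases : μ + 1 = K0 ∨ (μ + 1 < K0 ∧ μ = min a b - 1) := by omega
        rcases hcases with h | ⟨h, h'⟩
        · have hne : n (μ + 1) ≠ 0 := by rw [h]; exact hKn
          have hge := Hpos (μ + 1)
          omega
        · have hz : n (μ + 1) = 0 := hmin (μ + 1) h (by omega) h3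
          omega
      | succ k hk ih =>
        intro h3
        obtain ⟨ih1, ih2⟩ := ih (by omega)
        have hcon := Hc k (by omega) (by omega)
        have e : k + 1 - 1 = k := by omega
        rw [e]
        split_ifs at hcon <;> omega
    exact ⟨μ, by omega, hzero, fun k h1 h2 => (main k h1 h2).1⟩


lemma fermTerm_ne_zero_iff (r a b L : ℕ) (m : Fin (r - 3) → ℕ) :
    fermTerm r a b L (RatFunc.X : RatFunc ℚ) m ≠ 0 ↔
      ∀ i, topE r a b L m i % 2 = 0 ∧ 2 * (m i : ℤ) ≤ topE r a b L m i := by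
  unfold fermTerm
  rw [mul_ne_zero_iff, Finset.prod_ne_zero_iff]
  constructor
  · intro ⟨_, h⟩ i
    have h2 := (gaussHalf_ne_zero_iff _ _).1 (h i (Finset.mem_univ i))
    exact ⟨h2.1, h2.2.2⟩
  · intro h
    exact ⟨zpow_ne_zero _ RatFunc.X_ne_zero,
      fun i _ => (gaussHalf_ne_zero_iff _ _).2 ⟨(h i).1, Int.natCast_nonneg _, (h i).2⟩⟩

lemma key_mAt (r : ℕ) (m : Fin (r - 3) → ℕ) (k : ℕ) (h1 : 1 ≤ k) (h3 : k ≤ r - 3)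
    (i : Fin (r - 3)) (hvi : (i : ℕ) = r - 3 - k) :
    mAt (r - 3) m ((r : ℤ) - 2 - (k : ℤ)) = (m i : ℤ) := by
  have e : (r : ℤ) - 2 - (k : ℤ) = ((i : ℕ) : ℤ) + 1 := by omega
  rw [e, mAt_coe]

lemma HC_of (r a b L : ℕ) (hr : 3 ≤ r) (m : Fin (r - 3) → ℕ)
    (hF : ∀ i, 2 * (m i : ℤ) ≤ topE r a b L m i) :
    ∀ k, 1 ≤ k → k ≤ r - 3 →
      2 * mAt (r - 3) m ((r : ℤ) - 2 - (k : ℤ))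
        ≤ mAt (r - 3) m ((r : ℤ) - 2 - ((k - 1 : ℕ) : ℤ))
          + mAt (r - 3) m ((r : ℤ) - 2 - ((k + 1 : ℕ) : ℤ))
          + (if k = r - 3 then (L : ℤ) else 0)
          + (if k = a - 1 then 1 else 0) + (if k = b - 1 then 1 else 0) := by
  intro k h1 h3
  have hh : r - 3 - k < r - 3 := by omega
  have hvi : ((⟨r - 3 - k, hh⟩ : Fin (r - 3)) : ℕ) = r - 3 - k := rfl
  have h := hF ⟨r - 3 - k, hh⟩
  rw [topE_eq] at h
  have e0 := key_mAt r m k h1 h3 ⟨r - 3 - k, hh⟩ hvi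
  have eA : mAt (r - 3) m (((((⟨r - 3 - k, hh⟩ : Fin (r - 3)) : ℕ)) : ℤ))
      = mAt (r - 3) m ((r : ℤ) - 2 - ((k + 1 : ℕ) : ℤ)) := by congr 1; omega
  have eB : mAt (r - 3) m ((((((⟨r - 3 - k, hh⟩ : Fin (r - 3)) : ℕ)) : ℤ)) + 2)
      = mAt (r - 3) m ((r : ℤ) - 2 - ((k - 1 : ℕ) : ℤ)) := by congr 1; omega
  rw [← e0, eA, eB] at h
  split_ifs at h ⊢ <;> omega

lemma bound_of (r a b L : ℕ) (hr : 3 ≤ r) (m : Fin (r - 3) → ℕ)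
    (hF : ∀ i, 2 * (m i : ℤ) ≤ topE r a b L m i) :
    ∀ i, m i ≤ (r - 2) * (L + 2) := by
  intro i
  have hi := i.isLt
  have HB := seq_bound r a b L (fun k => mAt (r - 3) m ((r : ℤ) - 2 - (k : ℤ))) hr
    (fun k => mAt_nonneg _ _ _)
    (mAt_out _ _ _ (by omega))
    (fun k hk => mAt_out _ _ _ (by omega))
    (HC_of r a b L hr m hF)
  have h2 := HB (r - 3 - (i : ℕ))
  beta_reduce at h2
  rw [key_mAt r m (r - 3 - (i : ℕ)) (by omega) (by omega) i (by omega)] at h2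
  have e : (((r - 2) * (L + 2) : ℕ) : ℤ) = ((r : ℤ) - 2) * ((L : ℤ) + 2) := by
    have e1 : ((r - 2 : ℕ) : ℤ) = (r : ℤ) - 2 := by omega
    push_cast [e1]; ring
  omega

lemma cover_restr (r a b L : ℕ) (hr : 3 ≤ r) (ha : 1 ≤ a) (ha' : a ≤ r - 1)
    (hb : 1 ≤ b) (hb' : b ≤ r - 2) (m : Fin (r - 3) → ℕ) (hp : parity r a b m)
    (hF : ∀ i, 2 * (m i : ℤ) ≤ topE r a b L m i) :
    ∃ μ, μ < min a b ∧ restrMu r a b μ m := by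
  have HPAR : ∀ k, 1 ≤ k → k ≤ r - 3 →
      mAt (r - 3) m ((r : ℤ) - 2 - (k : ℤ)) % 2
        = ((min (a - 1) k + min (b - 1) k : ℕ) : ℤ) % 2 := by
    intro k h1 h3
    have hh : r - 3 - k < r - 3 := by omega
    have hvi : ((⟨r - 3 - k, hh⟩ : Fin (r - 3)) : ℕ) = r - 3 - k := rfl
    have hpi := hp ⟨r - 3 - k, hh⟩
    have hQ : Qab r a b ⟨r - 3 - k, hh⟩ = min (a - 1) k + min (b - 1) k := by
      simp only [Qab]; omega
    rw [key_mAt r m k h1 h3 ⟨r - 3 - k, hh⟩ hvi]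
    omega
  obtain ⟨μ, hμ, hz, hlb⟩ := seq_cover r a b L
    (fun k => mAt (r - 3) m ((r : ℤ) - 2 - (k : ℤ))) hr ha ha' hb hb'
    (fun k => mAt_nonneg _ _ _)
    (mAt_out _ _ _ (by omega))
    (fun k hk => mAt_out _ _ _ (by omega))
    (HC_of r a b L hr m hF) HPAR
  refine ⟨μ, hμ, ?_, ?_⟩
  · intro i hi
    have hiv := i.isLt
    have e0 := key_mAt r m (r - 3 - (i : ℕ)) (by omega) (by omega) i (by omega)
    have hlbk := hlb (r - 3 - (i : ℕ)) (by omega) (by omega)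
    beta_reduce at hlbk
    rw [e0] at hlbk
    have hQ : Qab r a b i = min (a - 1) (r - 3 - (i : ℕ)) + min (b - 1) (r - 3 - (i : ℕ)) := by
      simp only [Qab]; omega
    have hpi := hp i
    refine ⟨(((m i : ℤ) - (Qab r a b i : ℤ) + 2 * μ) / 2).toNat, ?_⟩
    omega
  · intro i hi
    have hiv := i.isLt
    have e0 := key_mAt r m (r - 3 - (i : ℕ)) (by omega) (by omega) i (by omega)
    have hzk := hz (r - 3 - (i : ℕ)) (by omega) (by omega)
    beta_reduce at hzk
    rw [e0] at hzk
    omega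

lemma restr_parity (r a b : ℕ) (hr : 3 ≤ r) (ha : 1 ≤ a) (hb : 1 ≤ b) (μ : ℕ)
    (hμ : μ < min a b) (m : Fin (r - 3) → ℕ) (h : restrMu r a b μ m) : parity r a b m := by
  intro i
  have hi := i.isLt
  by_cases hcase : (i : ℕ) + 1 + μ + 3 ≤ r
  · obtain ⟨t, ht⟩ := h.1 i hcase
    omega
  · have hz := h.2 i (by omega)
    have hQ : Qab r a b i = min (a - 1) (r - ((i : ℕ) + 1) - 2)
        + min (b - 1) (r - ((i : ℕ) + 1) - 2) := rfl
    omega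

lemma disj (r a b : ℕ) (hr : 3 ≤ r) (ha : 1 ≤ a) (hb : 1 ≤ b) (hb' : b ≤ r - 2) (μ1 μ2 : ℕ)
    (h12 : μ1 < μ2) (h2 : μ2 < min a b) (m : Fin (r - 3) → ℕ)
    (hr1 : restrMu r a b μ1 m) (hr2 : restrMu r a b μ2 m) : False := by
  have hb4 : μ1 + 4 ≤ r := by omega
  have hh : r - μ1 - 4 < r - 3 := by omega
  have hvi : ((⟨r - μ1 - 4, hh⟩ : Fin (r - 3)) : ℕ) = r - μ1 - 4 := rfl
  obtain ⟨t, ht⟩ := hr1.1 ⟨r - μ1 - 4, hh⟩ (by omega)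
  have hz := hr2.2 ⟨r - μ1 - 4, hh⟩ (by omega)
  have hQ : Qab r a b ⟨r - μ1 - 4, hh⟩ = min (a - 1) (μ1 + 1) + min (b - 1) (μ1 + 1) := by
    simp only [Qab]; omega
  omega

lemma pointwise (r a b L : ℕ) (hr : 3 ≤ r) (ha : 1 ≤ a) (ha' : a ≤ r - 1)
    (hb : 1 ≤ b) (hb' : b ≤ r - 2) (m : Fin (r - 3) → ℕ) :
    ∑ μ ∈ Finset.range (min a b),
        (if restrMu r a b μ m then fermTerm r a b L (RatFunc.X : RatFunc ℚ) m else 0)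
      = if parity r a b m then fermTerm r a b L (RatFunc.X : RatFunc ℚ) m else 0 := by
  by_cases hp : parity r a b m
  · rw [if_pos hp]
    by_cases hF : fermTerm r a b L (RatFunc.X : RatFunc ℚ) m = 0
    · rw [hF]
      simp
    · obtain ⟨μ0, hμ0, hres⟩ := cover_restr r a b L hr ha ha' hb hb' m hp
        (fun i => ((fermTerm_ne_zero_iff r a b L m).1 hF i).2)
      rw [Finset.sum_eq_single μ0]
      · rw [if_pos hres]
      · intro μ' hmem hne
        have hμ' := Finset.mem_range.1 hmem
        have : ¬ restrMu r a b μ' m := by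
          intro hres'
          rcases lt_or_gt_of_ne hne with hlt | hgt
          · exact disj r a b hr ha hb hb' μ' μ0 hlt hμ0 m hres' hres
          · exact disj r a b hr ha hb hb' μ0 μ' hgt hμ' m hres hres'
        rw [if_neg this]
      · intro h
        exact absurd (Finset.mem_range.2 hμ0) h
  · rw [if_neg hp]
    apply Finset.sum_eq_zero
    intro μ hμ
    rw [if_neg (fun h => hp (restr_parity r a b hr ha hb μ (Finset.mem_range.1 hμ) m h))]


/-- **Equivalence of the double sum (3.32) and the single sum (3.33)** of part II:
`Σ_{μ=0}^{min(a,b)-1} Σ_{m ∈ (μ)} f(m) = Σ_{m ≡ Q_{a,b}} f(m)`, stated in the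
variable `t = q^{1/4}` (all exponents multiplied by `4`). -/
theorem double_sum_simplification (r a b L : ℕ) (hr : 3 ≤ r) (ha : 1 ≤ a) (ha' : a ≤ r - 1)
    (hb : 1 ≤ b) (hb' : b ≤ r - 2) (hL : ((L : ℤ) - ((a : ℤ) - b)) % 2 = 0) :
    ∑ μ ∈ Finset.range (min a b),
        ∑ᶠ m : Fin (r - 3) → ℕ,
          (if restrMu r a b μ m then fermTerm r a b L (RatFunc.X : RatFunc ℚ) m else 0)
      = ∑ᶠ m : Fin (r - 3) → ℕ,
          (if parity r a b m then fermTerm r a b L (RatFunc.X : RatFunc ℚ) m else 0) := by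
  classical
  set s : Finset (Fin (r - 3) → ℕ) :=
    Fintype.piFinset (fun _ => Finset.range ((r - 2) * (L + 2) + 1)) with hs
  have hbd : ∀ c : (Fin (r - 3) → ℕ) → Prop,
      Function.support
        (fun m => if c m then fermTerm r a b L (RatFunc.X : RatFunc ℚ) m else 0) ⊆ ↑s := by
    intro c m hm
    simp only [Function.mem_support] at hm
    have hFm : fermTerm r a b L (RatFunc.X : RatFunc ℚ) m ≠ 0 := by
      intro h
      apply hm
      rw [h]
      simp
    have hb2 := bound_of r a b L hr m
      (fun i => ((fermTerm_ne_zero_iff r a b L m).1 hFm i).2)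
    simp only [hs, Finset.mem_coe, Fintype.mem_piFinset, Finset.mem_range]
    intro i
    exact Nat.lt_succ_of_le (hb2 i)
  rw [finsum_eq_finset_sum_of_support_subset _ (hbd (parity r a b))]
  rw [Finset.sum_congr rfl
    (fun μ _ => finsum_eq_finset_sum_of_support_subset _ (hbd (restrMu r a b μ)))]
  rw [Finset.sum_comm]
  exact Finset.sum_congr rfl fun m _ => pointwise r a b L hr ha ha' hb hb' m
end
end
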